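/- Let H be a Hopf algebra, J ∈ H ⊗ H a twisting element, and A a left H-module algebra. Then the map (μ_A)_J(f ⊗ g) = μ_A(J · (f ⊗ g)) defines an associative product on A with the same unit 1_A, and A with this new product is a left module algebra over the twisted Hopf algebra (H)_J. -/

import Mathlib

open TensorProduct

universe u

section defs

variable (K : Type u) [Field K] {H A : Type u} [Ring H] [HopfAlgebra K H]
  [Ring A] [Algebra K A]

/-- the action of `H ⊗ H` on `A ⊗ A` induced by an action `act : H →ₗ End A`. -/
noncomputable def act2 (act : H →ₗ[K] Module.End K A) :
    H ⊗[K] H →ₗ[K] A ⊗[K] A →ₗ[K] A ⊗[K] A :=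
  TensorProduct.homTensorHomMap (RingHom.id K) A A A A ∘ₗ TensorProduct.map act act

/-- the twisted product `(μ_A)_J(f ⊗ g) = μ_A(J · (f ⊗ g))`. -/
noncomputable def twMul (act : H →ₗ[K] Module.End K A) (J : H ⊗[K] H) (f g : A) : A :=
  LinearMap.mul' K A (act2 K act J (f ⊗ₜ[K] g))

end defs

/-! Acting by `x ∈ H ⊗ H` after multiplying two of three factors of `A ⊗ A ⊗ A` is the same
as acting by `(Δ ⊗ id) x` (or `(id ⊗ Δ) x`) before. Hence the two bracketings of a twisted
triple product are `μ ∘ (μ ⊗ id)` after the action of `(Δ ⊗ id)(J) · (J ⊗ 1)`, resp.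
`μ ∘ (id ⊗ μ)` after that of `(id ⊗ Δ)(J) · (1 ⊗ J)`, and the cocycle identity says that the
associator matches these two elements. The counit conditions give the unit, and the
module-algebra identity applied to `J · (f ⊗ g)` gives the action of `Δ(h) · J = J · Δ_J(h)`. -/

section TensorAct

variable {R B C D M N P : Type*} [CommSemiring R]
  [Semiring B] [Algebra R B] [Semiring C] [Algebra R C] [Semiring D] [Algebra R D]
  [AddCommMonoid M] [Module R M] [AddCommMonoid N] [Module R N] [AddCommMonoid P] [Module R P]
  (ρ : B →ₗ[R] Module.End R M) (σ : C →ₗ[R] Module.End R N) (τ : D →ₗ[R] Module.End R P)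

noncomputable def tensorAct : B ⊗[R] C →ₗ[R] Module.End R (M ⊗[R] N) :=
  homTensorHomMap (RingHom.id R) M N M N ∘ₗ map ρ σ

@[simp]
lemma tensorAct_tmul (b : B) (c : C) : tensorAct ρ σ (b ⊗ₜ c) = map (ρ b) (σ c) := by
  simp [tensorAct]

variable {ρ σ} in
lemma tensorAct_mul (hρ : ∀ x y, ρ (x * y) = ρ x * ρ y) (hσ : ∀ x y, σ (x * y) = σ x * σ y)
    (X Y : B ⊗[R] C) : tensorAct ρ σ (X * Y) = tensorAct ρ σ X * tensorAct ρ σ Y := by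
  induction X using TensorProduct.induction_on with
  | zero => simp
  | add X₁ X₂ ih₁ ih₂ => simp [add_mul, ih₁, ih₂]
  | tmul b c =>
    induction Y using TensorProduct.induction_on with
    | zero => simp
    | add Y₁ Y₂ ih₁ ih₂ => simp [mul_add, ih₁, ih₂]
    | tmul b' c' =>
      simp only [Algebra.TensorProduct.tmul_mul_tmul, tensorAct_tmul, hρ, hσ,
        Module.End.mul_eq_comp, map_comp]

lemma tensorAct_assoc (X : (B ⊗[R] C) ⊗[R] D) (u : (M ⊗[R] N) ⊗[R] P) :
    TensorProduct.assoc R M N P (tensorAct (tensorAct ρ σ) τ X u)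
      = tensorAct ρ (tensorAct σ τ) (Algebra.TensorProduct.assoc R R R B C D X)
          (TensorProduct.assoc R M N P u) := by
  suffices (TensorProduct.assoc R M N P).toLinearMap ∘ₗ tensorAct (tensorAct ρ σ) τ X
      = tensorAct ρ (tensorAct σ τ) (Algebra.TensorProduct.assoc R R R B C D X)
          ∘ₗ (TensorProduct.assoc R M N P).toLinearMap from LinearMap.congr_fun this u
  induction X using TensorProduct.induction_on with
  | zero => simp
  | add X₁ X₂ ih₁ ih₂ =>
    rw [map_add, map_add, map_add, LinearMap.comp_add, LinearMap.add_comp, ih₁, ih₂]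
  | tmul x d =>
    induction x using TensorProduct.induction_on with
    | zero => simp
    | add x₁ x₂ ih₁ ih₂ =>
      rw [add_tmul, map_add, map_add, map_add, LinearMap.comp_add, LinearMap.add_comp, ih₁, ih₂]
    | tmul b c => ext; simp

end TensorAct

lemma Algebra.TensorProduct.assoc_tmul_one {R B C D : Type*} [CommSemiring R]
  [Semiring B] [Algebra R B] [Semiring C] [Algebra R C] [Semiring D] [Algebra R D]
    (z : B ⊗[R] C) :
    Algebra.TensorProduct.assoc R R R B C D (z ⊗ₜ 1)
      = Algebra.TensorProduct.map (AlgHom.id R B) Algebra.TensorProduct.includeLeft z := by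
  induction z using TensorProduct.induction_on with
  | zero => simp
  | add x y ihx ihy => rw [add_tmul, map_add, ihx, ihy, map_add]
  | tmul b c => simp

lemma LinearMap.mul'_rTensor_mul' {R A : Type*} [CommSemiring R] [Semiring A] [Algebra R A]
    (u : (A ⊗[R] A) ⊗[R] A) :
    mul' R A ((mul' R A).rTensor A u)
      = mul' R A ((mul' R A).lTensor A (TensorProduct.assoc R A A A u)) := by
  suffices mul' R A ∘ₗ (mul' R A).rTensor A
      = mul' R A ∘ₗ (mul' R A).lTensor A ∘ₗ (TensorProduct.assoc R A A A).toLinearMap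
    from LinearMap.congr_fun this u
  ext
  simp [mul_assoc]

section ModuleAlgebra

variable {R H A : Type*} [CommSemiring R] [Semiring H] [Bialgebra R H] [Semiring A] [Algebra R A]
  {act : H →ₗ[R] Module.End R A}

open Coalgebra

lemma tensorAct_rTensor_mul'
    (hmul : ∀ h, act h ∘ₗ LinearMap.mul' R A = LinearMap.mul' R A ∘ₗ tensorAct act act (comul h))
    (x : H ⊗[R] H) (u : (A ⊗[R] A) ⊗[R] A) :
    tensorAct act act x ((LinearMap.mul' R A).rTensor A u)
      = (LinearMap.mul' R A).rTensor A
          (tensorAct (tensorAct act act) act (comul.rTensor H x) u) := by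
  suffices tensorAct act act x ∘ₗ (LinearMap.mul' R A).rTensor A
      = (LinearMap.mul' R A).rTensor A ∘ₗ tensorAct (tensorAct act act) act (comul.rTensor H x)
    from LinearMap.congr_fun this u
  induction x using TensorProduct.induction_on with
  | zero => simp
  | add x₁ x₂ ih₁ ih₂ => simp only [map_add, LinearMap.comp_add, LinearMap.add_comp, ih₁, ih₂]
  | tmul c d =>
    refine TensorProduct.ext' fun v a => ?_
    have hc := LinearMap.congr_fun (hmul c) v
    simp only [LinearMap.comp_apply] at hc
    simp [hc]

lemma tensorAct_lTensor_mul'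
    (hmul : ∀ h, act h ∘ₗ LinearMap.mul' R A = LinearMap.mul' R A ∘ₗ tensorAct act act (comul h))
    (x : H ⊗[R] H) (u : A ⊗[R] (A ⊗[R] A)) :
    tensorAct act act x ((LinearMap.mul' R A).lTensor A u)
      = (LinearMap.mul' R A).lTensor A
          (tensorAct act (tensorAct act act) (comul.lTensor H x) u) := by
  suffices tensorAct act act x ∘ₗ (LinearMap.mul' R A).lTensor A
      = (LinearMap.mul' R A).lTensor A ∘ₗ tensorAct act (tensorAct act act) (comul.lTensor H x)
    from LinearMap.congr_fun this u
  induction x using TensorProduct.induction_on with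
  | zero => simp
  | add x₁ x₂ ih₁ ih₂ => simp only [map_add, LinearMap.comp_add, LinearMap.add_comp, ih₁, ih₂]
  | tmul c d =>
    refine TensorProduct.ext' fun a v => ?_
    have hd := LinearMap.congr_fun (hmul d) v
    simp only [LinearMap.comp_apply] at hd
    simp [hd]

lemma mul'_tensorAct_one_tmul (hone : ∀ h, act h 1 = counit (R := R) h • 1) (x : H ⊗[R] H) (f : A) :
    LinearMap.mul' R A (tensorAct act act x (1 ⊗ₜ f))
      = act (TensorProduct.lid R H (counit.rTensor H x)) f := by
  induction x using TensorProduct.induction_on with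
  | zero => simp
  | add x₁ x₂ ih₁ ih₂ => simp only [map_add, LinearMap.add_apply, ih₁, ih₂]
  | tmul c d => simp [hone]

lemma mul'_tensorAct_tmul_one (hone : ∀ h, act h 1 = counit (R := R) h • 1) (x : H ⊗[R] H) (f : A) :
    LinearMap.mul' R A (tensorAct act act x (f ⊗ₜ 1))
      = act (TensorProduct.rid R H (counit.lTensor H x)) f := by
  induction x using TensorProduct.induction_on with
  | zero => simp
  | add x₁ x₂ ih₁ ih₂ => simp only [map_add, LinearMap.add_apply, ih₁, ih₂]
  | tmul c d => simp [hone]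

end ModuleAlgebra

section Twist

open Coalgebra

variable {K H A : Type u} [Field K] [Ring H] [HopfAlgebra K H] [Ring A] [Algebra K A]
  {act : H →ₗ[K] Module.End K A} {J : H ⊗[K] H}

lemma act2_eq_tensorAct : act2 K act = tensorAct act act := rfl

lemma twMul_eq (f g : A) : twMul K act J f g = LinearMap.mul' K A (tensorAct act act J (f ⊗ₜ g)) :=
  rfl

lemma assoc_rTensor_comul_mul_tmul_one
    (hcocycle : Algebra.TensorProduct.assoc K K K H H H (comul.rTensor H J)
        * Algebra.TensorProduct.map (AlgHom.id K H) Algebra.TensorProduct.includeLeft J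
      = comul.lTensor H J
        * (Algebra.TensorProduct.includeRight : (H ⊗[K] H) →ₐ[K] H ⊗[K] (H ⊗[K] H)) J) :
    Algebra.TensorProduct.assoc K K K H H H (comul.rTensor H J * (J ⊗ₜ 1))
      = comul.lTensor H J * (1 ⊗ₜ J) := by
  rw [map_mul, Algebra.TensorProduct.assoc_tmul_one, hcocycle,
    Algebra.TensorProduct.includeRight_apply]

lemma twMul_assoc (hact_mul : ∀ h h', act (h * h') = act h * act h') (hact_one : act 1 = 1)
    (hmul : ∀ h, act h ∘ₗ LinearMap.mul' K A = LinearMap.mul' K A ∘ₗ tensorAct act act (comul h))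
    (hcocycle : Algebra.TensorProduct.assoc K K K H H H (comul.rTensor H J)
        * Algebra.TensorProduct.map (AlgHom.id K H) Algebra.TensorProduct.includeLeft J
      = comul.lTensor H J
        * (Algebra.TensorProduct.includeRight : (H ⊗[K] H) →ₐ[K] H ⊗[K] (H ⊗[K] H)) J)
    (f g h : A) :
    twMul K act J (twMul K act J f g) h = twMul K act J f (twMul K act J g h) := by
  set μ := LinearMap.mul' K A
  have htensorAct_mul := tensorAct_mul hact_mul hact_mul
  calc twMul K act J (twMul K act J f g) h
      = μ (tensorAct act act J (μ.rTensor A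
          (tensorAct (tensorAct act act) act (J ⊗ₜ 1) ((f ⊗ₜ g) ⊗ₜ h)))) := by
        simp [twMul_eq, hact_one, μ]
    _ = μ (μ.rTensor A (tensorAct (tensorAct act act) act (comul.rTensor H J * (J ⊗ₜ 1))
          ((f ⊗ₜ g) ⊗ₜ h))) := by
        rw [tensorAct_rTensor_mul' hmul, tensorAct_mul htensorAct_mul hact_mul, Module.End.mul_apply]
    _ = μ (μ.lTensor A (tensorAct act (tensorAct act act) (comul.lTensor H J * (1 ⊗ₜ J))
          (f ⊗ₜ (g ⊗ₜ h)))) := by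
        rw [LinearMap.mul'_rTensor_mul', tensorAct_assoc,
          assoc_rTensor_comul_mul_tmul_one hcocycle, TensorProduct.assoc_tmul]
    _ = μ (tensorAct act act J (μ.lTensor A
          (tensorAct act (tensorAct act act) (1 ⊗ₜ J) (f ⊗ₜ (g ⊗ₜ h))))) := by
        rw [tensorAct_lTensor_mul' hmul, tensorAct_mul hact_mul htensorAct_mul, Module.End.mul_apply]
    _ = twMul K act J f (twMul K act J g h) := by
        simp [twMul_eq, hact_one, μ]

lemma one_twMul (hact_one : act 1 = 1) (hone : ∀ h, act h 1 = counit (R := K) h • 1)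
    (hcounit : TensorProduct.lid K H (counit.rTensor H J) = 1) (f : A) :
    twMul K act J 1 f = f := by
  rw [twMul_eq, mul'_tensorAct_one_tmul hone, hcounit, hact_one, Module.End.one_apply]

lemma twMul_one (hact_one : act 1 = 1) (hone : ∀ h, act h 1 = counit (R := K) h • 1)
    (hcounit : TensorProduct.rid K H (counit.lTensor H J) = 1) (f : A) :
    twMul K act J f 1 = f := by
  rw [twMul_eq, mul'_tensorAct_tmul_one hone, hcounit, hact_one, Module.End.one_apply]

lemma act_twMul (hact_mul : ∀ h h', act (h * h') = act h * act h')
    (hmul : ∀ h, act h ∘ₗ LinearMap.mul' K A = LinearMap.mul' K A ∘ₗ tensorAct act act (comul h))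
    (h : H) (f g : A) :
    act h (twMul K act J f g)
      = LinearMap.mul' K A (act2 K act (comul h * J) (f ⊗ₜ g)) := by
  rw [act2_eq_tensorAct, tensorAct_mul hact_mul hact_mul, Module.End.mul_apply, twMul_eq,
    ← LinearMap.comp_apply, hmul, LinearMap.comp_apply]

end Twist

theorem stmt12_general {K H A : Type u} [Field K] [Ring H] [HopfAlgebra K H]
    [Ring A] [Algebra K A]
    -- A is a left H-module algebra via act
    (act : H →ₗ[K] Module.End K A)
    (hact_mul : ∀ h h' : H, act (h * h') = act h * act h')
    (hact_one : act 1 = 1)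
    (hmodalg : ∀ (h : H) (f g : A),
      act h (f * g) = LinearMap.mul' K A (act2 K act (Coalgebra.comul (R := K) h) (f ⊗ₜ[K] g)))
    (hmodone : ∀ h : H, act h (1 : A) = Coalgebra.counit (R := K) h • (1 : A))
    -- J is a twisting element of H
    (J : H ⊗[K] H)
    (hcocycle : Algebra.TensorProduct.assoc K K K H H H
          (LinearMap.rTensor H (Coalgebra.comul (R := K)) J)
        * Algebra.TensorProduct.map (AlgHom.id K H) Algebra.TensorProduct.includeLeft J
      = LinearMap.lTensor H (Coalgebra.comul (R := K)) J
        * (Algebra.TensorProduct.includeRight : (H ⊗[K] H) →ₐ[K] H ⊗[K] (H ⊗[K] H)) J)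
    (hcounit₁ : (TensorProduct.lid K H) (LinearMap.rTensor H (Coalgebra.counit (R := K)) J) = 1)
    (hcounit₂ : (TensorProduct.rid K H) (LinearMap.lTensor H (Coalgebra.counit (R := K)) J) = 1) :
    -- the twisted product is associative with unit 1_A,
    (∀ f g h : A, twMul K act J (twMul K act J f g) h = twMul K act J f (twMul K act J g h))
    ∧ (∀ f : A, twMul K act J 1 f = f)
    ∧ (∀ f : A, twMul K act J f 1 = f)
    -- and A with the twisted product is a module algebra over (H)_J, whose
    -- comultiplication is Δ_J = J⁻¹ Δ J : equivalently J · Δ_J(h) = Δ(h) · J acts as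
    ∧ (∀ (h : H) (f g : A),
        act h (twMul K act J f g)
          = LinearMap.mul' K A (act2 K act (Coalgebra.comul (R := K) h * J) (f ⊗ₜ[K] g))) := by
  have hmul : ∀ h, act h ∘ₗ LinearMap.mul' K A
      = LinearMap.mul' K A ∘ₗ tensorAct act act (Coalgebra.comul h) :=
    fun h => TensorProduct.ext' (hmodalg h)
  exact ⟨twMul_assoc hact_mul hact_one hmul hcocycle, one_twMul hact_one hmodone hcounit₁,
    twMul_one hact_one hmodone hcounit₂, act_twMul hact_mul hmul⟩

theorem stmt12 {K H A : Type u} [Field K] [Ring H] [HopfAlgebra K H]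
    [Ring A] [Algebra K A]
    -- A is a left H-module algebra via act
    (act : H →ₗ[K] Module.End K A)
    (hact_mul : ∀ h h' : H, act (h * h') = act h * act h')
    (hact_one : act 1 = 1)
    (hmodalg : ∀ (h : H) (f g : A),
      act h (f * g) = LinearMap.mul' K A (act2 K act (Coalgebra.comul (R := K) h) (f ⊗ₜ[K] g)))
    (hmodone : ∀ h : H, act h (1 : A) = Coalgebra.counit (R := K) h • (1 : A))
    -- J is a twisting element of H
    (J Ji : H ⊗[K] H)
    (hJJi : J * Ji = 1) (hJiJ : Ji * J = 1)
    (hcocycle : Algebra.TensorProduct.assoc K K K H H H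
          (LinearMap.rTensor H (Coalgebra.comul (R := K)) J)
        * Algebra.TensorProduct.map (AlgHom.id K H) Algebra.TensorProduct.includeLeft J
      = LinearMap.lTensor H (Coalgebra.comul (R := K)) J
        * (Algebra.TensorProduct.includeRight : (H ⊗[K] H) →ₐ[K] H ⊗[K] (H ⊗[K] H)) J)
    (hcounit₁ : (TensorProduct.lid K H) (LinearMap.rTensor H (Coalgebra.counit (R := K)) J) = 1)
    (hcounit₂ : (TensorProduct.rid K H) (LinearMap.lTensor H (Coalgebra.counit (R := K)) J) = 1) :
    -- the twisted product is associative with unit 1_A,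
    (∀ f g h : A, twMul K act J (twMul K act J f g) h = twMul K act J f (twMul K act J g h))
    ∧ (∀ f : A, twMul K act J 1 f = f)
    ∧ (∀ f : A, twMul K act J f 1 = f)
    -- and A with the twisted product is a module algebra over (H)_J, whose
    -- comultiplication is Δ_J = J⁻¹ Δ J : equivalently J · Δ_J(h) = Δ(h) · J acts as
    ∧ (∀ (h : H) (f g : A),
        act h (twMul K act J f g)
          = LinearMap.mul' K A (act2 K act (Coalgebra.comul (R := K) h * J) (f ⊗ₜ[K] g))) :=
  stmt12_general act hact_mul hact_one hmodalg hmodone J hcocycle hcounit₁ hcounit₂
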